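/- Let A be a commutative noetherian ring, M a finitely generated A-module, and F a finitely generated free A-module. If φ: M → F is versal, then φ admits a factorization φ = j ∘ ev_M, where ev_M: M → M** is the canonical evaluation map into the double dual and j: M** → F is an injective A-linear map (concretely, j corresponds to the double dual map φ**: M** → F** under the canonical isomorphism F ≅ F**). -/
import Mathlib


open Module LinearMap

/-- A linear map `φ : M → F` is *versal* if every linear map from `M` into a finitely
generated free module factors through `φ`. -/
def IsVersal (A : Type) [CommRing A] {M F : Type} [AddCommGroup M] [Module A M]
    [AddCommGroup F] [Module A F] (φ : M →ₗ[A] F) : Prop :=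
  ∀ (E : Type) [AddCommGroup E] [Module A E] [Module.Free A E] [Module.Finite A E]
    (g : M →ₗ[A] E), ∃ h : F →ₗ[A] E, g = h ∘ₗ φ

/-- If `φ : M → F` is versal then it factors as the evaluation map `M → M**` followed by
the injective map `M** → F` corresponding to `φ** : M** → F**` under the canonical
isomorphism `F ≅ F**`. -/
theorem stmt1 (A : Type) [CommRing A] [IsNoetherianRing A]
    (M F : Type) [AddCommGroup M] [Module A M] [Module.Finite A M]
    [AddCommGroup F] [Module A F] [Module.Free A F] [Module.Finite A F]
    (φ : M →ₗ[A] F) (hφ : IsVersal A φ) :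
    Function.Injective
        ((Module.evalEquiv A F).symm.toLinearMap ∘ₗ φ.dualMap.dualMap) ∧
      φ = ((Module.evalEquiv A F).symm.toLinearMap ∘ₗ φ.dualMap.dualMap) ∘ₗ
        Module.Dual.eval A M := by
  constructor
  · intro ξ η h
    have h' : φ.dualMap.dualMap ξ = φ.dualMap.dualMap η :=
      (Module.evalEquiv A F).symm.injective h
    -- it suffices to show ξ and η agree on every f : M*
    apply LinearMap.ext
    intro f
    obtain ⟨g, hg⟩ := hφ A f
    have : φ.dualMap g = f := hg.symm
    calc ξ f = ξ (φ.dualMap g) := by rw [this]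
      _ = (φ.dualMap.dualMap ξ) g := rfl
      _ = (φ.dualMap.dualMap η) g := by rw [h']
      _ = η f := by rw [show (φ.dualMap.dualMap η) g = η (φ.dualMap g) from rfl, this]
  · apply LinearMap.ext
    intro m
    have key : φ.dualMap.dualMap (Module.Dual.eval A M m) = Module.evalEquiv A F (φ m) := by
      apply LinearMap.ext
      intro f
      rfl
    simp only [LinearMap.comp_apply, key, LinearEquiv.coe_coe, LinearEquiv.symm_apply_apply]
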